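/- For the LZ problem in dimension d ≥ 3, if a feasible point x satisfies x_j ≠ sin(6π x_1 + jπ/d) for at least one index j ∈ {2, ..., d}, then x is dominated by the feasible point y defined by y_1 = x_1 and y_j = sin(6π x_1 + jπ/d) for j = 2, ..., d: f1(y) ≤ f1(x), f2(y) ≤ f2(x), and at least one inequality is strict. Consequently the Pareto optimal set of the LZ problem is exactly {x : x_1 ∈ [0,1], x_j = sin(6π x_1 + jπ/d) for j = 2, ..., d}. -/

import Mathlib

/-!
Each objective is a front term (`x₁`, resp. `1 - √x₁`) plus a nonnegative penalty
`(2/|J|) Σ_{j ∈ J} (x_j - sin(6π x₁ + jπ/d))²` that vanishes on the manifold. Projecting onto the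
manifold keeps `x₁` and kills both penalties; an off-manifold index lies in `J1` or `J2`, which is
then nonempty, so that penalty was strictly positive. Conversely a point `x` on the manifold has
objectives `(x₁, 1 - √x₁)`, and a feasible `y` with `f1(y) ≤ x₁` and `f2(y) ≤ 1 - √x₁` must have
`y₁ ≤ x₁ ≤ y₁`, after which neither inequality can be strict.
-/

/-- The target value `sin(6π x₁ + jπ/d)` of the `j`-th coordinate in the LZ problem. -/
noncomputable def lzTarget (d : ℕ) (x1 : ℝ) (j : ℕ) : ℝ :=
  Real.sin (6 * Real.pi * x1 + (j : ℝ) * Real.pi / (d : ℝ))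

/-- `J1`: odd indices among `2, ..., d`. -/
def lzJ1 (d : ℕ) : Finset ℕ := (Finset.Icc 2 d).filter (fun j => Odd j)

/-- `J2`: even indices among `2, ..., d`. -/
def lzJ2 (d : ℕ) : Finset ℕ := (Finset.Icc 2 d).filter (fun j => Even j)

/-- First objective of the LZ problem. -/
noncomputable def lzF1 (d : ℕ) (x : ℕ → ℝ) : ℝ :=
  x 1 + (2 / ((lzJ1 d).card : ℝ)) * ∑ j ∈ lzJ1 d, (x j - lzTarget d (x 1) j) ^ 2

/-- Second objective of the LZ problem. -/
noncomputable def lzF2 (d : ℕ) (x : ℕ → ℝ) : ℝ :=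
  1 - Real.sqrt (x 1) + (2 / ((lzJ2 d).card : ℝ)) * ∑ j ∈ lzJ2 d, (x j - lzTarget d (x 1) j) ^ 2

/-- Feasibility for the LZ problem: `x₁ ∈ [0,1]` and `x_j ∈ [−1,1]` for `j = 2, ..., d`. -/
def lzFeasible (d : ℕ) (x : ℕ → ℝ) : Prop :=
  x 1 ∈ Set.Icc (0 : ℝ) 1 ∧ ∀ j, 2 ≤ j → j ≤ d → x j ∈ Set.Icc (-1 : ℝ) 1

/-- Pareto optimality for the LZ problem. -/
def lzParetoOptimal (d : ℕ) (x : ℕ → ℝ) : Prop :=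
  lzFeasible d x ∧
    ¬ ∃ y : ℕ → ℝ, lzFeasible d y ∧ lzF1 d y ≤ lzF1 d x ∧ lzF2 d y ≤ lzF2 d x ∧
      (lzF1 d y < lzF1 d x ∨ lzF2 d y < lzF2 d x)

/-- The point `y` obtained from `x` by keeping `y₁ = x₁` and setting
`y_j = sin(6π x₁ + jπ/d)` for `j = 2, ..., d`. -/
noncomputable def lzProj (d : ℕ) (x : ℕ → ℝ) : ℕ → ℝ :=
  fun j => if 2 ≤ j ∧ j ≤ d then lzTarget d (x 1) j else x j

noncomputable def lzPenalty (d : ℕ) (J : Finset ℕ) (x : ℕ → ℝ) : ℝ :=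
  2 / (J.card : ℝ) * ∑ j ∈ J, (x j - lzTarget d (x 1) j) ^ 2

def lzOnManifold (d : ℕ) (x : ℕ → ℝ) : Prop :=
  ∀ j, 2 ≤ j → j ≤ d → x j = lzTarget d (x 1) j

def lzDominates (d : ℕ) (y x : ℕ → ℝ) : Prop :=
  lzF1 d y ≤ lzF1 d x ∧ lzF2 d y ≤ lzF2 d x ∧ (lzF1 d y < lzF1 d x ∨ lzF2 d y < lzF2 d x)

section Penalty

variable {d : ℕ} {J : Finset ℕ} {x : ℕ → ℝ}

lemma lzPenalty_nonneg : 0 ≤ lzPenalty d J x := by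
  unfold lzPenalty
  positivity

lemma lzPenalty_eq_zero (h : ∀ j ∈ J, x j = lzTarget d (x 1) j) : lzPenalty d J x = 0 := by
  unfold lzPenalty
  rw [Finset.sum_eq_zero fun j hj => by simp [h j hj], mul_zero]

lemma lzPenalty_pos {j : ℕ} (hj : j ∈ J) (hne : x j ≠ lzTarget d (x 1) j) :
    0 < lzPenalty d J x := by
  have hcard : (0 : ℝ) < J.card := by exact_mod_cast Finset.card_pos.mpr ⟨j, hj⟩
  have hsum : 0 < ∑ k ∈ J, (x k - lzTarget d (x 1) k) ^ 2 :=
    Finset.sum_pos' (fun _ _ => sq_nonneg _) ⟨j, hj, sq_pos_of_ne_zero (sub_ne_zero.mpr hne)⟩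
  unfold lzPenalty
  positivity

end Penalty

section Objectives

variable {d : ℕ} {x : ℕ → ℝ}

lemma lzF1_eq (d : ℕ) (x : ℕ → ℝ) : lzF1 d x = x 1 + lzPenalty d (lzJ1 d) x := rfl

lemma lzF2_eq (d : ℕ) (x : ℕ → ℝ) : lzF2 d x = 1 - √(x 1) + lzPenalty d (lzJ2 d) x := rfl

lemma le_lzF1 : x 1 ≤ lzF1 d x :=
  le_add_of_nonneg_right lzPenalty_nonneg

lemma le_lzF2 : 1 - √(x 1) ≤ lzF2 d x :=
  le_add_of_nonneg_right lzPenalty_nonneg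

lemma mem_lzJ1_or_mem_lzJ2 {j : ℕ} (h2 : 2 ≤ j) (hjd : j ≤ d) : j ∈ lzJ1 d ∨ j ∈ lzJ2 d := by
  simp only [lzJ1, lzJ2, Finset.mem_filter, Finset.mem_Icc]
  rcases Nat.even_or_odd j with h | h
  exacts [.inr ⟨⟨h2, hjd⟩, h⟩, .inl ⟨⟨h2, hjd⟩, h⟩]

lemma lzF1_of_onManifold (hx : lzOnManifold d x) : lzF1 d x = x 1 := by
  rw [lzF1_eq, lzPenalty_eq_zero, add_zero]
  intro j hj
  obtain ⟨h2, hjd⟩ := Finset.mem_Icc.mp (Finset.mem_of_mem_filter j hj)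
  exact hx j h2 hjd

lemma lzF2_of_onManifold (hx : lzOnManifold d x) : lzF2 d x = 1 - √(x 1) := by
  rw [lzF2_eq, lzPenalty_eq_zero, add_zero]
  intro j hj
  obtain ⟨h2, hjd⟩ := Finset.mem_Icc.mp (Finset.mem_of_mem_filter j hj)
  exact hx j h2 hjd

end Objectives

section Projection

variable {d : ℕ} {x : ℕ → ℝ}

lemma lzProj_one : lzProj d x 1 = x 1 := by
  simp [lzProj]

lemma lzProj_onManifold : lzOnManifold d (lzProj d x) := by
  intro j h2 hjd
  simp [lzProj, h2, hjd]

lemma lzFeasible_lzProj (hx : x 1 ∈ Set.Icc (0 : ℝ) 1) : lzFeasible d (lzProj d x) := by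
  refine ⟨lzProj_one ▸ hx, fun j h2 hjd => ?_⟩
  rw [lzProj_onManifold j h2 hjd]
  exact ⟨Real.neg_one_le_sin _, Real.sin_le_one _⟩

lemma lzProj_dominates (hoff : ∃ j, 2 ≤ j ∧ j ≤ d ∧ x j ≠ lzTarget d (x 1) j) :
    lzDominates d (lzProj d x) x := by
  obtain ⟨j, h2, hjd, hne⟩ := hoff
  rw [lzDominates, lzF1_of_onManifold lzProj_onManifold, lzF2_of_onManifold lzProj_onManifold,
    lzProj_one]
  refine ⟨le_lzF1, le_lzF2, ?_⟩
  rcases mem_lzJ1_or_mem_lzJ2 h2 hjd with hj | hj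
  · exact .inl (lt_add_of_pos_right _ (lzPenalty_pos hj hne))
  · exact .inr (lt_add_of_pos_right _ (lzPenalty_pos hj hne))

end Projection

lemma not_lzDominates_of_onManifold {d : ℕ} {x y : ℕ → ℝ} (hx : lzOnManifold d x)
    (hy : 0 ≤ y 1) : ¬ lzDominates d y x := by
  rintro ⟨h1, h2, hlt⟩
  rw [lzF1_of_onManifold hx] at h1 hlt
  rw [lzF2_of_onManifold hx] at h2 hlt
  have hle : y 1 ≤ x 1 := le_lzF1.trans h1
  have hge : x 1 ≤ y 1 := (Real.sqrt_le_sqrt_iff hy).mp (by linarith [le_lzF2 (d := d) (x := y)])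
  have hy1 : y 1 = x 1 := le_antisymm hle hge
  rcases hlt with hlt | hlt
  · exact (le_lzF1 (d := d)).not_gt (hy1 ▸ hlt)
  · exact (le_lzF2 (d := d)).not_gt (hy1 ▸ hlt)

theorem lz_off_manifold_dominated_and_pareto_set_general (d : ℕ) :
    (∀ x : ℕ → ℝ, lzFeasible d x →
      (∃ j, 2 ≤ j ∧ j ≤ d ∧ x j ≠ lzTarget d (x 1) j) →
      lzFeasible d (lzProj d x) ∧
        lzF1 d (lzProj d x) ≤ lzF1 d x ∧ lzF2 d (lzProj d x) ≤ lzF2 d x ∧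
        (lzF1 d (lzProj d x) < lzF1 d x ∨ lzF2 d (lzProj d x) < lzF2 d x)) ∧
    {x : ℕ → ℝ | lzParetoOptimal d x} =
      {x : ℕ → ℝ | lzFeasible d x ∧ ∀ j, 2 ≤ j → j ≤ d → x j = lzTarget d (x 1) j} := by
  refine ⟨fun x hx hoff => ⟨lzFeasible_lzProj hx.1, lzProj_dominates hoff⟩, ?_⟩
  ext x
  constructor
  · rintro ⟨hx, hundominated⟩
    refine ⟨hx, fun j h2 hjd => by_contra fun hne => hundominated ?_⟩
    exact ⟨lzProj d x, lzFeasible_lzProj hx.1, lzProj_dominates ⟨j, h2, hjd, hne⟩⟩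
  · rintro ⟨hx, hman⟩
    exact ⟨hx, fun ⟨y, hy, hdom⟩ => not_lzDominates_of_onManifold hman hy.1.1 hdom⟩

/-- For the LZ problem with `d ≥ 3`, any feasible point off the manifold
`x_j = sin(6π x₁ + jπ/d)` (for some `j ∈ {2, ..., d}`) is dominated by its
projection onto the manifold; consequently the Pareto optimal set is exactly
the set of feasible points lying on the manifold. -/
theorem lz_off_manifold_dominated_and_pareto_set (d : ℕ) (hd : 3 ≤ d) :
    (∀ x : ℕ → ℝ, lzFeasible d x →
      (∃ j, 2 ≤ j ∧ j ≤ d ∧ x j ≠ lzTarget d (x 1) j) →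
      lzFeasible d (lzProj d x) ∧
        lzF1 d (lzProj d x) ≤ lzF1 d x ∧ lzF2 d (lzProj d x) ≤ lzF2 d x ∧
        (lzF1 d (lzProj d x) < lzF1 d x ∨ lzF2 d (lzProj d x) < lzF2 d x)) ∧
    {x : ℕ → ℝ | lzParetoOptimal d x} =
      {x : ℕ → ℝ | lzFeasible d x ∧ ∀ j, 2 ≤ j → j ≤ d → x j = lzTarget d (x 1) j} :=
  lz_off_manifold_dominated_and_pareto_set_general d
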